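/- Let E ⊆ ℝⁿ with H^{n-1}(E) = 0 ((n-1)-dimensional Hausdorff measure zero) and let γ be a non-constant rectifiable path in ℝⁿ. Then for Lebesgue-almost every x ∈ ℝⁿ, the translated path γ + x has trace disjoint from E. -/

import Mathlib

open MeasureTheory Set
open scoped ENNReal

/-- A rectifiable curve in `ℝⁿ`, given by its arclength parametrization on `[0, len]`. -/
structure RectCurve (n : ℕ) where
  len : ℝ
  len_nonneg : 0 ≤ len
  toFun : ℝ → EuclideanSpace ℝ (Fin n)
  arclength : ∀ t ∈ Set.Icc 0 len, eVariationOn toFun (Set.Icc 0 t) = ENNReal.ofReal t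

/-- The line integral `∫_γ ρ ds` of a Borel function over a rectifiable curve
(via its arclength parametrization). -/
noncomputable def lineIntegral {n : ℕ} (ρ : EuclideanSpace ℝ (Fin n) → ℝ≥0∞)
    (γ : RectCurve n) : ℝ≥0∞ :=
  ∫⁻ t in Set.Icc 0 γ.len, ρ (γ.toFun t)

/-- A Borel function `ρ ≥ 0` is admissible for a curve family `Γ` if `∫_γ ρ ds ≥ 1`
for every `γ ∈ Γ`. -/
def Admissible {n : ℕ} (ρ : EuclideanSpace ℝ (Fin n) → ℝ≥0∞) (Γ : Set (RectCurve n)) : Prop :=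
  Measurable ρ ∧ ∀ γ ∈ Γ, 1 ≤ lineIntegral ρ γ

/-- The `p`-modulus of a curve family: `inf ∫ ρᵖ` over admissible `ρ`. -/
noncomputable def modulus {n : ℕ} (p : ℝ) (Γ : Set (RectCurve n)) : ℝ≥0∞ :=
  ⨅ (ρ : EuclideanSpace ℝ (Fin n) → ℝ≥0∞) (_ : Admissible ρ Γ), ∫⁻ x, ρ x ^ p

/-! A Hausdorff-null set `E` of dimension `n - 1` is covered by sets `tᵢ` with `∑ (diam tᵢ)ⁿ⁻¹`
arbitrarily small. Cutting `[0, ℓ]` into about `ℓ / ρᵢ` intervals of length `ρᵢ ≈ diam tᵢ`, the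
1-Lipschitz curve turns this into a cover of `E - |γ|` by sets of diameter `≲ ρᵢ` whose total
`n`-dimensional cost is `≲ (ℓ + 1) ∑ ρᵢⁿ⁻¹`. So the set `E - |γ|` of bad translations is
`Hⁿ`-null, and `Hⁿ` is a Haar measure on `ℝⁿ`, hence it is Lebesgue-null. -/

open Metric NNReal Filter Topology

theorem RectCurve.lipschitzOnWith {n : ℕ} (γ : RectCurve n) :
    LipschitzOnWith 1 γ.toFun (Icc 0 γ.len) := by
  refine lipschitzOnWith_iff_dist_le_mul.2 fun s hs t ht => ?_
  rw [NNReal.coe_one, one_mul]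
  wlog hst : s ≤ t generalizing s t
  · rw [dist_comm, dist_comm s]; exact this t ht s hs (le_of_not_ge hst)
  have hsplit : eVariationOn γ.toFun (Icc 0 s) + eVariationOn γ.toFun (Icc s t)
      = eVariationOn γ.toFun (Icc 0 t) := by
    simpa using eVariationOn.Icc_add_Icc γ.toFun (s := univ) hs.1 hst (mem_univ s)
  rw [γ.arclength s hs, γ.arclength t ht] at hsplit
  have hvar : eVariationOn γ.toFun (Icc s t) = ENNReal.ofReal (t - s) := by
    rw [ENNReal.ofReal_sub _ hs.1, ← hsplit, ENNReal.add_sub_cancel_left ENNReal.ofReal_ne_top]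
  have hle :=
    eVariationOn.edist_le γ.toFun (s := Icc s t) (left_mem_Icc.2 hst) (right_mem_Icc.2 hst)
  rw [hvar, edist_dist, ENNReal.ofReal_le_ofReal_iff (by linarith)] at hle
  rwa [dist_comm s, Real.dist_eq, abs_of_nonneg (by linarith)]

local notation "μHpre[" d ", " r "]" => OuterMeasure.mkMetric'.pre (fun t => ediam t ^ d) r

section HausdorffNull

variable {X : Type*} [EMetricSpace X] [MeasurableSpace X] [BorelSpace X] {d : ℝ} {s : Set X}

theorem Set.eq_empty_of_hausdorffMeasure_eq_zero_of_nonpos (hd : d ≤ 0) (hs : μH[d] s = 0) :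
    s = ∅ := by
  by_contra hne
  have := (Measure.one_le_hausdorffMeasure_zero_of_nonempty (nonempty_iff_ne_empty.2 hne)).trans
    (Measure.hausdorffMeasure_mono hd s)
  simp [hs] at this

theorem exists_cover_of_hausdorffMeasure_eq_zero (hs : μH[d] s = 0) {r ε : ℝ≥0∞} (hr : 0 < r)
    (hε : 0 < ε) :
    ∃ t : ℕ → Set X, s ⊆ ⋃ i, t i ∧ (∀ i, ediam (t i) ≤ r) ∧
      ∑' i, ⨆ _ : (t i).Nonempty, ediam (t i) ^ d < ε := by
  rw [Measure.hausdorffMeasure_apply, ENNReal.iSup_eq_zero] at hs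
  simpa only [iSup_pos hr, iInf_lt_iff, exists_prop] using (hs r).trans_lt hε

theorem hausdorffMeasure_eq_iSup_pre : μH[d] s = ⨆ r > 0, μHpre[d, r] s := by
  rw [Measure.hausdorffMeasure, ← OuterMeasure.coe_mkMetric]
  simp only [OuterMeasure.mkMetric, OuterMeasure.mkMetric', OuterMeasure.iSup_apply]

end HausdorffNull

theorem Icc_subset_biUnion_Icc_mul (a b : ℝ) {ρ : ℝ} (hρ : 0 < ρ) :
    Icc a b ⊆ ⋃ j ∈ Finset.range (⌊(b - a) / ρ⌋₊ + 1), Icc (a + j * ρ) (a + (j + 1) * ρ) := by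
  intro s hs
  have hj : ⌊(s - a) / ρ⌋₊ ≤ (s - a) / ρ := Nat.floor_le (div_nonneg (by linarith [hs.1]) hρ.le)
  have hj' : (s - a) / ρ < ⌊(s - a) / ρ⌋₊ + 1 := Nat.lt_floor_add_one _
  rw [le_div_iff₀ hρ] at hj
  rw [div_lt_iff₀ hρ] at hj'
  refine mem_iUnion₂.2 ⟨⌊(s - a) / ρ⌋₊, ?_, by constructor <;> linarith⟩
  exact Finset.mem_range_succ_iff.2 (Nat.floor_le_floor (by gcongr; exact hs.2))

section image2

variable {X Y : Type*} [EMetricSpace X] [EMetricSpace Y] {g : X → ℝ → Y} {K₁ K₂ : ℝ≥0}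
  {a b : ℝ} {d : ℝ} {r : ℝ≥0∞}

theorem pre_image2_Icc_le {A : Set X} (hab : a ≤ b)
    (hg₁ : ∀ t ∈ Icc a b, LipschitzOnWith K₁ (g · t) A)
    (hg₂ : ∀ x ∈ A, LipschitzOnWith K₂ (g x) (Icc a b)) (hd : 0 ≤ d) {ρ : ℝ} (hρ : 0 < ρ)
    (hA : ediam A ≤ ENNReal.ofReal ρ) (hr : ENNReal.ofReal ((K₁ + K₂) * ρ) ≤ r) :
    μHpre[d + 1, r] (image2 g A (Icc a b)) ≤
      ENNReal.ofReal ((K₁ + K₂) ^ (d + 1) * (b - a + ρ) * ρ ^ d) := by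
  set N := ⌊(b - a) / ρ⌋₊
  set J : ℕ → Set ℝ := fun j => Icc a b ∩ Icc (a + j * ρ) (a + (j + 1) * ρ)
  have hcover : image2 g A (Icc a b) ⊆ ⋃ j ∈ Finset.range (N + 1), image2 g A (J j) := by
    rintro _ ⟨x, hx, t, ht, rfl⟩
    obtain ⟨j, hj, htj⟩ := mem_iUnion₂.1 (Icc_subset_biUnion_Icc_mul a b hρ ht)
    exact mem_iUnion₂.2 ⟨j, hj, mem_image2_of_mem hx ⟨ht, htj⟩⟩
  have hpiece : ∀ j, μHpre[d + 1, r] (image2 g A (J j)) ≤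
      ENNReal.ofReal (((K₁ + K₂) * ρ) ^ (d + 1)) := by
    intro j
    have hJ : ediam (J j) ≤ ENNReal.ofReal ρ := by
      refine (ediam_mono inter_subset_right).trans_eq ?_
      rw [Real.ediam_Icc]; ring_nf
    have hdiam : ediam (image2 g A (J j)) ≤ ENNReal.ofReal ((K₁ + K₂) * ρ) := calc
      _ ≤ K₁ * ediam A + K₂ * ediam (J j) := LipschitzOnWith.ediam_image2_le g A (J j)
            (fun t ht => hg₁ t ht.1) (fun x hx => (hg₂ x hx).mono inter_subset_left)
      _ ≤ K₁ * ENNReal.ofReal ρ + K₂ * ENNReal.ofReal ρ := by gcongr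
      _ = ENNReal.ofReal ((K₁ + K₂) * ρ) := by
        rw [← add_mul, ENNReal.ofReal_mul (by positivity), ← NNReal.coe_add,
          ENNReal.ofReal_coe_nnreal, ENNReal.coe_add]
    refine (OuterMeasure.mkMetric'.pre_le (hdiam.trans hr)).trans ?_
    rw [← ENNReal.ofReal_rpow_of_nonneg (by positivity) (by linarith)]
    gcongr
  have hcount : ((N + 1 : ℕ) : ℝ) * ρ ≤ b - a + ρ := by
    have := Nat.floor_le (div_nonneg (sub_nonneg.2 hab) hρ.le)
    rw [le_div_iff₀ hρ] at this
    push_cast; linarith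
  calc μHpre[d + 1, r] (image2 g A (Icc a b))
      ≤ ∑ j ∈ Finset.range (N + 1), μHpre[d + 1, r] (image2 g A (J j)) :=
        (measure_mono hcover).trans (measure_biUnion_finset_le _ _)
    _ ≤ ∑ j ∈ Finset.range (N + 1), ENNReal.ofReal (((K₁ + K₂) * ρ) ^ (d + 1)) :=
        Finset.sum_le_sum fun j _ => hpiece j
    _ = ENNReal.ofReal ((K₁ + K₂) ^ (d + 1) * (((N + 1 : ℕ) : ℝ) * ρ) * ρ ^ d) := by
      rw [Finset.sum_const, Finset.card_range, nsmul_eq_mul, ← ENNReal.ofReal_natCast,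
        ← ENNReal.ofReal_mul (by positivity), Real.mul_rpow (by positivity) hρ.le,
        Real.rpow_add_one hρ.ne']
      ring_nf
    _ ≤ ENNReal.ofReal ((K₁ + K₂) ^ (d + 1) * (b - a + ρ) * ρ ^ d) := by gcongr

theorem pre_image2_Icc_le_mul_ediam_rpow {A : Set X} (hab : a ≤ b)
    (hg₁ : ∀ t ∈ Icc a b, LipschitzOnWith K₁ (g · t) A)
    (hg₂ : ∀ x ∈ A, LipschitzOnWith K₂ (g x) (Icc a b)) (hd : 0 ≤ d) (hA : ediam A ≤ 1)
    (hr : ENNReal.ofReal ((K₁ + K₂) * (ediam A).toReal) < r) :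
    μHpre[d + 1, r] (image2 g A (Icc a b)) ≤
      ENNReal.ofReal ((K₁ + K₂) ^ (d + 1) * (b - a + 1)) * ediam A ^ d := by
  set D := (ediam A).toReal
  have hD : ediam A = ENNReal.ofReal D :=
    (ENNReal.ofReal_toReal (ne_top_of_le_ne_top ENNReal.one_ne_top hA)).symm
  have hD1 : D ≤ 1 := by simpa using ENNReal.toReal_mono ENNReal.one_ne_top hA
  have hlim : Tendsto (fun ρ => ENNReal.ofReal ((K₁ + K₂) ^ (d + 1) * (b - a + ρ) * ρ ^ d))
      (𝓝[>] D) (𝓝 (ENNReal.ofReal ((K₁ + K₂) ^ (d + 1) * (b - a + D) * D ^ d))) := by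
    refine Continuous.tendsto ?_ D |>.mono_left nhdsWithin_le_nhds
    exact ENNReal.continuous_ofReal.comp ((continuous_const.mul (continuous_const.add
      continuous_id)).mul (Real.continuous_rpow_const hd))
  have hr' : ∀ᶠ ρ in 𝓝 D, ENNReal.ofReal ((K₁ + K₂) * ρ) < r :=
    (ENNReal.continuous_ofReal.comp (continuous_const.mul continuous_id)).continuousAt.eventually
      (gt_mem_nhds hr)
  have hbound : ∀ᶠ ρ in 𝓝[>] D, μHpre[d + 1, r] (image2 g A (Icc a b)) ≤
      ENNReal.ofReal ((K₁ + K₂) ^ (d + 1) * (b - a + ρ) * ρ ^ d) := by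
    filter_upwards [self_mem_nhdsWithin, nhdsWithin_le_nhds hr'] with ρ (hρ : D < ρ) hρr
    exact pre_image2_Icc_le hab hg₁ hg₂ hd (ENNReal.toReal_nonneg.trans_lt hρ)
      (hD.trans_le (ENNReal.ofReal_le_ofReal hρ.le)) hρr.le
  -- letting `ρ` decrease to `diam A` also handles pieces of diameter zero
  refine (ge_of_tendsto hlim hbound).trans ?_
  rw [hD, ENNReal.ofReal_rpow_of_nonneg ENNReal.toReal_nonneg hd,
    ← ENNReal.ofReal_mul (by have := sub_nonneg.2 hab; positivity)]
  gcongr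

theorem pre_image2_Icc_eq_zero [MeasurableSpace X] [BorelSpace X] {S : Set X} (hab : a ≤ b)
    (hg₁ : ∀ t ∈ Icc a b, LipschitzOnWith K₁ (g · t) S)
    (hg₂ : ∀ x ∈ S, LipschitzOnWith K₂ (g x) (Icc a b)) (hd : 0 ≤ d) (hS : μH[d] S = 0)
    (hr : 0 < r) : μHpre[d + 1, r] (image2 g S (Icc a b)) = 0 := by
  obtain ⟨η, hηr, hη0, hη1⟩ : ∃ η : ℝ, ENNReal.ofReal ((K₁ + K₂) * η) < r ∧ 0 < η ∧ η ≤ 1 := by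
    have hlim : Tendsto (fun η : ℝ => ENNReal.ofReal ((K₁ + K₂) * η)) (𝓝[>] 0) (𝓝 0) := by
      refine Continuous.tendsto' ?_ 0 0 (by simp) |>.mono_left nhdsWithin_le_nhds
      exact ENNReal.continuous_ofReal.comp (continuous_const.mul continuous_id)
    exact ((hlim.eventually (gt_mem_nhds hr)).and (Ioc_mem_nhdsGT one_pos)).exists
  set C := ENNReal.ofReal ((K₁ + K₂) ^ (d + 1) * (b - a + 1))
  refine le_antisymm (ENNReal.le_of_forall_pos_le_add fun ε hε _ => ?_) bot_le
  obtain ⟨t, hSt, htη, htε⟩ := exists_cover_of_hausdorffMeasure_eq_zero hS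
    (ENNReal.ofReal_pos.2 hη0)
    (ENNReal.div_pos (ENNReal.coe_ne_zero.2 hε.ne') ENNReal.ofReal_ne_top)
  have hpiece : ∀ i, μHpre[d + 1, r] (image2 g (t i ∩ S) (Icc a b)) ≤
      C * ⨆ _ : (t i).Nonempty, ediam (t i) ^ d := by
    intro i
    rcases (t i).eq_empty_or_nonempty with hti | hti
    · simp [hti]
    have hA : ediam (t i ∩ S) ≤ ENNReal.ofReal η := (ediam_mono inter_subset_left).trans (htη i)
    rw [iSup_pos hti]
    refine (pre_image2_Icc_le_mul_ediam_rpow hab (fun t ht => (hg₁ t ht).mono inter_subset_right)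
      (fun x hx => hg₂ x hx.2) hd (hA.trans (ENNReal.ofReal_le_one.2 hη1)) ?_).trans ?_
    · refine lt_of_le_of_lt (ENNReal.ofReal_le_ofReal ?_) hηr
      gcongr
      exact ENNReal.toReal_le_of_le_ofReal hη0.le hA
    · gcongr
      exact inter_subset_left
  calc μHpre[d + 1, r] (image2 g S (Icc a b))
      ≤ ∑' i, μHpre[d + 1, r] (image2 g (t i ∩ S) (Icc a b)) := by
        refine (measure_mono ?_).trans (measure_iUnion_le _)
        rintro _ ⟨x, hx, s, hs, rfl⟩
        obtain ⟨i, hi⟩ := mem_iUnion.1 (hSt hx)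
        exact mem_iUnion.2 ⟨i, mem_image2_of_mem ⟨hi, hx⟩ hs⟩
    _ ≤ ∑' i, C * ⨆ _ : (t i).Nonempty, ediam (t i) ^ d := ENNReal.tsum_le_tsum hpiece
    _ = C * ∑' i, ⨆ _ : (t i).Nonempty, ediam (t i) ^ d := ENNReal.tsum_mul_left
    _ ≤ C * (ε / C) := by gcongr
    _ ≤ 0 + ε := by rw [zero_add]; exact ENNReal.mul_div_le

theorem hausdorffMeasure_image2_Icc_eq_zero [MeasurableSpace X] [BorelSpace X]
    [MeasurableSpace Y] [BorelSpace Y] {S : Set X}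
    (hg₁ : ∀ t ∈ Icc a b, LipschitzOnWith K₁ (g · t) S)
    (hg₂ : ∀ x ∈ S, LipschitzOnWith K₂ (g x) (Icc a b)) (hS : μH[d] S = 0) :
    μH[d + 1] (image2 g S (Icc a b)) = 0 := by
  rcases lt_or_ge d 0 with hd | hd
  · rw [S.eq_empty_of_hausdorffMeasure_eq_zero_of_nonpos hd.le hS, image2_empty_left,
      measure_empty]
  rcases lt_or_ge b a with hab | hab
  · rw [Icc_eq_empty_of_lt hab, image2_empty_right, measure_empty]
  simp only [hausdorffMeasure_eq_iSup_pre, ENNReal.iSup_eq_zero]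
  exact fun r hr => pre_image2_Icc_eq_zero hab hg₁ hg₂ hd hS hr

end image2

theorem stmt_10_general {n : ℕ} (E : Set (EuclideanSpace ℝ (Fin n)))
    (hE : μH[(n : ℝ) - 1] E = 0) (γ : RectCurve n) :
    ∀ᵐ x ∂(volume : Measure (EuclideanSpace ℝ (Fin n))),
      E ∩ (fun t => γ.toFun t + x) '' Set.Icc 0 γ.len = ∅ := by
  have hnull : μH[(n : ℝ)] (image2 (fun e t => e - γ.toFun t) E (Icc 0 γ.len)) = 0 := by
    simpa using hausdorffMeasure_image2_Icc_eq_zero (K₁ := 1) (K₂ := 1)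
      (fun t _ => (IsometryEquiv.subRight (γ.toFun t)).isometry.lipschitz.lipschitzOnWith)
      (fun e _ => ((IsometryEquiv.subLeft e).isometry.lipschitz.comp_lipschitzOnWith
        γ.lipschitzOnWith).weaken (one_mul 1).le) hE
  have hac : (volume : Measure (EuclideanSpace ℝ (Fin n))) ≪ μH[(n : ℝ)] :=
    Measure.absolutelyContinuous_isAddHaarMeasure _ _
  filter_upwards [hac.ae_le (measure_eq_zero_iff_ae_notMem.1 hnull)] with x hx
  refine eq_empty_iff_forall_notMem.2 ?_
  rintro _ ⟨he, s, hs, rfl⟩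
  exact hx ⟨_, he, s, hs, add_sub_cancel_left _ _⟩

/-- If `E ⊆ ℝⁿ` has `(n-1)`-dimensional Hausdorff measure zero and `γ` is a
non-constant rectifiable path, then for a.e. `x ∈ ℝⁿ` the trace of `γ + x` is disjoint
from `E`. -/
theorem stmt_10 {n : ℕ} (E : Set (EuclideanSpace ℝ (Fin n)))
    (hE : μH[(n : ℝ) - 1] E = 0) (γ : RectCurve n) (hγ : 0 < γ.len) :
    ∀ᵐ x ∂(volume : Measure (EuclideanSpace ℝ (Fin n))),
      E ∩ (fun t => γ.toFun t + x) '' Set.Icc 0 γ.len = ∅ :=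
  stmt_10_general E hE γ
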